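/- For a bounded linear operator T on a complex Hilbert space, w(T)⁴ ≤ (1/2)·w(T²)² + (1/8)·‖T*T + TT*‖². -/

import Mathlib

open scoped NNReal ENNReal
open ContinuousLinearMap

set_option synthInstance.maxHeartbeats 1000000
set_option maxHeartbeats 1000000


variable {H : Type*} [NormedAddCommGroup H] [InnerProductSpace ℂ H] [CompleteSpace H]

/-- The numerical radius of a bounded linear operator. -/
noncomputable def numRadius (T : H →L[ℂ] H) : ℝ :=
  ⨆ x : {x : H // ‖x‖ = 1}, ‖(inner ℂ (T x) x : ℂ)‖

/-- The modulus `|T| = (T*T)^{1/2}`. -/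
noncomputable def opAbs (T : H →L[ℂ] H) : H →L[ℂ] H :=
  CFC.sqrt (adjoint T * T)

/-- The `t`-Aluthge transform `|T|^t U |T|^{1-t}` (with `|T|^0` the support
projection, i.e. `U*U` for the polar partial isometry `U`). -/
noncomputable def aluthge (T U : H →L[ℂ] H) (t : ℝ≥0) : H →L[ℂ] H :=
  CFC.nnrpow (opAbs T) t * U * CFC.nnrpow (opAbs T) (1 - t)

/-!
For a unit vector `x`, rotate `p = T x` and `q = T* x` by phases so that both `⟪x, p⟫` and
`⟪x, q⟫ = ⟪T x, x⟫` become `|⟪T x, x⟫|`. Cauchy–Schwarz for the rotated sum gives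
`4 |⟪T x, x⟫|² ≤ ‖T x‖² + ‖T* x‖² + 2 |⟪T x, T* x⟫| ≤ ‖T*T + TT*‖ + 2 w(T²)`,
and `(a + 2b)² ≤ 2a² + 8b²` turns the supremum of this over `x` into the claim.
-/

open scoped InnerProductSpace

section InnerProductSpace

variable {𝕜 E : Type*} [RCLike 𝕜] [NormedAddCommGroup E] [InnerProductSpace 𝕜 E]

theorem norm_inner_add_norm_inner_sq_le (x p q : E) :
    (‖⟪x, p⟫_𝕜‖ + ‖⟪x, q⟫_𝕜‖) ^ 2 ≤ ‖x‖ ^ 2 * (‖p‖ ^ 2 + ‖q‖ ^ 2 + 2 * ‖⟪p, q⟫_𝕜‖) := by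
  obtain ⟨a, ha, hap⟩ := RCLike.exists_norm_eq_mul_self ⟪x, p⟫_𝕜
  obtain ⟨b, hb, hbq⟩ := RCLike.exists_norm_eq_mul_self ⟪x, q⟫_𝕜
  set v := a • p + b • q
  have hinner : ⟪x, v⟫_𝕜 = ((‖⟪x, p⟫_𝕜‖ + ‖⟪x, q⟫_𝕜‖ : ℝ) : 𝕜) := by
    simp only [v, inner_add_right, inner_smul_right, hap, hbq, RCLike.ofReal_add]
  have hv : ‖v‖ ^ 2 ≤ ‖p‖ ^ 2 + ‖q‖ ^ 2 + 2 * ‖⟪p, q⟫_𝕜‖ := by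
    have hcross : RCLike.re ⟪a • p, b • q⟫_𝕜 ≤ ‖⟪p, q⟫_𝕜‖ := by
      refine (RCLike.re_le_norm _).trans_eq ?_
      simp [inner_smul_left, inner_smul_right, ha, hb]
    rw [norm_add_sq (𝕜 := 𝕜), norm_smul, norm_smul, ha, hb]
    linarith
  calc (‖⟪x, p⟫_𝕜‖ + ‖⟪x, q⟫_𝕜‖) ^ 2 = ‖⟪x, v⟫_𝕜‖ ^ 2 := by
        rw [hinner, RCLike.norm_ofReal, abs_of_nonneg (by positivity)]
    _ ≤ (‖x‖ * ‖v‖) ^ 2 := by gcongr; exact norm_inner_le_norm x v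
    _ ≤ ‖x‖ ^ 2 * (‖p‖ ^ 2 + ‖q‖ ^ 2 + 2 * ‖⟪p, q⟫_𝕜‖) := by rw [mul_pow]; gcongr

variable [CompleteSpace E]

theorem norm_apply_sq_add_norm_adjoint_apply_sq_le (T : E →L[𝕜] E) (x : E) :
    ‖T x‖ ^ 2 + ‖adjoint T x‖ ^ 2 ≤ ‖adjoint T * T + T * adjoint T‖ * ‖x‖ ^ 2 := by
  set D := adjoint T * T + T * adjoint T
  have hD : ‖T x‖ ^ 2 + ‖adjoint T x‖ ^ 2 = RCLike.re ⟪D x, x⟫_𝕜 := by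
    rw [apply_norm_sq_eq_inner_adjoint_left, apply_norm_sq_eq_inner_adjoint_left,
      adjoint_adjoint, ← map_add, ← inner_add_left]
    rfl
  calc ‖T x‖ ^ 2 + ‖adjoint T x‖ ^ 2 ≤ ‖⟪D x, x⟫_𝕜‖ := hD ▸ RCLike.re_le_norm _
    _ ≤ ‖D x‖ * ‖x‖ := norm_inner_le_norm _ _
    _ ≤ ‖D‖ * ‖x‖ * ‖x‖ := by gcongr; exact D.le_opNorm x
    _ = ‖D‖ * ‖x‖ ^ 2 := by ring

end InnerProductSpace

omit [CompleteSpace H] in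
theorem numRadius_nonneg (T : H →L[ℂ] H) : 0 ≤ numRadius T :=
  Real.iSup_nonneg fun _ ↦ norm_nonneg _

omit [CompleteSpace H] in
theorem norm_inner_le_numRadius (T : H →L[ℂ] H) {x : H} (hx : ‖x‖ = 1) :
    ‖⟪T x, x⟫_ℂ‖ ≤ numRadius T := by
  refine le_ciSup (f := fun y : {y : H // ‖y‖ = 1} ↦ ‖⟪T y, y⟫_ℂ‖) ⟨‖T‖, ?_⟩ ⟨x, hx⟩
  rintro _ ⟨⟨y, hy⟩, rfl⟩
  calc ‖⟪T y, y⟫_ℂ‖ ≤ ‖T y‖ * ‖y‖ := norm_inner_le_norm _ _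
    _ ≤ ‖T‖ * ‖y‖ * ‖y‖ := by gcongr; exact T.le_opNorm y
    _ = ‖T‖ := by rw [hy, mul_one, mul_one]

theorem four_mul_norm_inner_sq_le (T : H →L[ℂ] H) {x : H} (hx : ‖x‖ = 1) :
    4 * ‖⟪T x, x⟫_ℂ‖ ^ 2
      ≤ ‖adjoint T * T + T * adjoint T‖ + 2 * numRadius (T ^ 2) := by
  have hsum : ‖⟪x, T x⟫_ℂ‖ + ‖⟪x, adjoint T x⟫_ℂ‖ = 2 * ‖⟪T x, x⟫_ℂ‖ := by
    rw [norm_inner_symm, adjoint_inner_right]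
    ring
  have hcross : ⟪T x, adjoint T x⟫_ℂ = ⟪(T ^ 2) x, x⟫_ℂ := by
    rw [adjoint_inner_right, pow_two]
    rfl
  have key := norm_inner_add_norm_inner_sq_le (𝕜 := ℂ) x (T x) (adjoint T x)
  rw [hsum, hcross, hx] at key
  have hnorms := norm_apply_sq_add_norm_adjoint_apply_sq_le T x
  rw [hx] at hnorms
  have hw := norm_inner_le_numRadius (T ^ 2) hx
  linarith

/-- w(T)⁴ ≤ (1/2)w(T²)² + (1/8)‖T*T + TT*‖². -/
theorem numRadius_pow_four_le_sq_bound (T : H →L[ℂ] H) :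
    numRadius T ^ 4 ≤ (1 / 2) * numRadius (T ^ 2) ^ 2
      + (1 / 8) * ‖adjoint T * T + T * adjoint T‖ ^ 2 := by
  set d := ‖adjoint T * T + T * adjoint T‖
  set w₂ := numRadius (T ^ 2)
  have hd : 0 ≤ d := norm_nonneg _
  have hw₂ : 0 ≤ w₂ := numRadius_nonneg _
  have hsq : numRadius T ^ 2 ≤ (d + 2 * w₂) / 4 := by
    refine (Real.le_sqrt (numRadius_nonneg T) (by positivity)).mp ?_
    refine Real.iSup_le (fun ⟨x, hx⟩ ↦ ?_) (Real.sqrt_nonneg _)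
    refine Real.le_sqrt_of_sq_le ?_
    linarith [four_mul_norm_inner_sq_le T hx]
  calc numRadius T ^ 4 = (numRadius T ^ 2) ^ 2 := by ring
    _ ≤ ((d + 2 * w₂) / 4) ^ 2 := by gcongr
    _ ≤ (1 / 2) * w₂ ^ 2 + (1 / 8) * d ^ 2 := by nlinarith [sq_nonneg (d - 2 * w₂)]
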